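/- arXiv:2210.13267 — 4 statements merged into one kernel-verified Lean document; each statement's English description precedes it below -/
import Mathlib

section
/- Define T(K) = ∑_{i=2}^{K} ∑_{k=1}^{i−1} 1/(k² + (i−k)²) for integers K ≥ 2. There exists a constant M > 0 such that for all integers K ≥ 2, |T(K) − (π/2)·ln K| ≤ M. In other words, the interference power accumulated from the lattice points (k, l) with k, l ≥ 1 and k + l ≤ K in the pure-loss model grows logarithmically in K, with leading coefficient π/2. -/
/-- The total interference power from the lattice points (k, l), k, l ≥ 1,
with k + l ≤ K, in the pure-loss (inverse-square) model. -/
noncomputable def interferenceSum (K : ℕ) : ℝ :=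
  ∑ i ∈ Finset.Icc 2 K, ∑ k ∈ Finset.Icc 1 (i - 1),
    1 / ((k : ℝ) ^ 2 + ((i : ℝ) - (k : ℝ)) ^ 2)

open Real Finset


noncomputable def gfun (i : ℕ) (x : ℝ) : ℝ := Real.arctan ((2*x - i)/i)

lemma hasDerivAt_gfun (i : ℕ) (hi : 1 ≤ i) (x : ℝ) :
    HasDerivAt (gfun i) ((i:ℝ) / (x^2 + ((i:ℝ)-x)^2)) x := by
  have hi0 : (1:ℝ) ≤ (i:ℝ) := by exact_mod_cast hi
  have hi0' : (i:ℝ) ≠ 0 := by linarith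
  have h1 : HasDerivAt (fun x : ℝ => (2*x - (i:ℝ))/i) (2/i) x := by
    simpa using (((hasDerivAt_id x).const_mul 2).sub_const ((i:ℝ))).div_const (i:ℝ)
  have h2 := (Real.hasDerivAt_arctan ((2*x - (i:ℝ))/i)).comp x h1
  have hD : 0 < x^2 + ((i:ℝ)-x)^2 := by nlinarith [sq_nonneg (2*x - (i:ℝ))]
  convert h2 using 1
  case e'_4 => rfl
  case e'_5 => rfl
  case e'_8 => rfl
  have h3 : 1 + ((2*x - (i:ℝ))/i)^2 ≠ 0 := by positivity
  field_simp
  ring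

lemma abs_div_sub_div_bound (I Dk Dc : ℝ) (hI : 2 ≤ I)
    (hDk2 : I^2/2 ≤ Dk) (hDc2 : I^2/2 ≤ Dc)
    (hd1 : Dc - Dk ≤ 2*I) (hd2 : Dk - Dc ≤ 2*I) :
    |I/Dk - I/Dc| ≤ 8/I^2 := by
  have hIpos : (0:ℝ) < I := by linarith
  have hI2p : (0:ℝ) < I^2 := by positivity
  have hDkpos : (0:ℝ) < Dk := by nlinarith
  have hDcpos : (0:ℝ) < Dc := by nlinarith
  have hI3 : (0:ℝ) ≤ I^3 := by positivity
  have hI2h : (0:ℝ) ≤ I^2/2 := by positivity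
  rw [abs_sub_le_iff]
  constructor
  · rw [div_sub_div _ _ (ne_of_gt hDkpos) (ne_of_gt hDcpos),
      div_le_div_iff₀ (mul_pos hDkpos hDcpos) hI2p]
    nlinarith [mul_le_mul_of_nonneg_left hd1 hI3,
      mul_le_mul hDk2 hDc2 hI2h (le_of_lt hDkpos)]
  · rw [div_sub_div _ _ (ne_of_gt hDcpos) (ne_of_gt hDkpos),
      div_le_div_iff₀ (mul_pos hDcpos hDkpos) hI2p]
    nlinarith [mul_le_mul_of_nonneg_left hd2 hI3,
      mul_le_mul hDk2 hDc2 hI2h (le_of_lt hDkpos)]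

lemma step_bound (i k : ℕ) (hi : 2 ≤ i) (hk : k + 1 ≤ i) :
    |(i:ℝ) / ((k:ℝ)^2 + ((i:ℝ)-(k:ℝ))^2) - (gfun i (k+1) - gfun i k)| ≤ 8 / (i:ℝ)^2 := by
  have hi1 : 1 ≤ i := by omega
  have hI : (2:ℝ) ≤ (i:ℝ) := by exact_mod_cast hi
  have hK0 : (0:ℝ) ≤ (k:ℝ) := Nat.cast_nonneg k
  have hKI : (k:ℝ) + 1 ≤ (i:ℝ) := by exact_mod_cast hk
  have hab : (k:ℝ) < (k:ℝ) + 1 := by linarith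
  obtain ⟨c, hc, hceq⟩ := exists_hasDerivAt_eq_slope (gfun i)
      (fun x => (i:ℝ) / (x^2 + ((i:ℝ)-x)^2)) hab
      (fun x _ => (hasDerivAt_gfun i hi1 x).continuousAt.continuousWithinAt)
      (fun x _ => hasDerivAt_gfun i hi1 x)
  have hc1 : (k:ℝ) ≤ c := le_of_lt hc.1
  have hc2 : c ≤ (k:ℝ) + 1 := le_of_lt hc.2
  have hslope : gfun i ((k:ℝ)+1) - gfun i (k:ℝ) = (i:ℝ) / (c^2 + ((i:ℝ)-c)^2) := by
    rw [hceq]; ring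
  rw [hslope]
  apply abs_div_sub_div_bound _ _ _ hI
  · nlinarith [sq_nonneg (2*(k:ℝ) - (i:ℝ))]
  · nlinarith [sq_nonneg (2*c - (i:ℝ))]
  · nlinarith [mul_nonneg (sub_nonneg.2 hc1) (sub_nonneg.2 hc1)]
  · nlinarith [mul_nonneg (sub_nonneg.2 hc1) (sub_nonneg.2 hc1)]

lemma inner_bound (i : ℕ) (hi : 2 ≤ i) :
    |(∑ k ∈ Finset.Icc 1 (i-1), 1 / ((k:ℝ)^2 + ((i:ℝ)-(k:ℝ))^2)) - Real.pi/(2*i)|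
      ≤ 9/(i:ℝ)^2 := by
  have hIpos : (0:ℝ) < (i:ℝ) := by positivity
  have hI2 : (2:ℝ) ≤ (i:ℝ) := by exact_mod_cast hi
  have hIne : (i:ℝ) ≠ 0 := ne_of_gt hIpos
  set F : ℕ → ℝ := fun k => (i:ℝ)/((k:ℝ)^2+((i:ℝ)-(k:ℝ))^2) with hF
  -- telescoping
  have htel : ∑ k ∈ range i, (gfun i ((k:ℝ)+1) - gfun i (k:ℝ)) = Real.pi/2 := by
    have h := Finset.sum_range_sub (fun k : ℕ => gfun i (k:ℝ)) i
    have hcast : ∀ k : ℕ, gfun i (((k+1:ℕ)):ℝ) = gfun i ((k:ℝ)+1) := by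
      intro k; push_cast; ring_nf
    have h2 : ∑ k ∈ range i, (gfun i ((k:ℝ)+1) - gfun i (k:ℝ))
        = gfun i ((i:ℕ):ℝ) - gfun i ((0:ℕ):ℝ) := by
      rw [← h]; exact Finset.sum_congr rfl fun k _ => by rw [hcast k]
    rw [h2]
    have e1 : gfun i ((i:ℕ):ℝ) = Real.pi/4 := by
      unfold gfun
      have : (2*(i:ℝ) - (i:ℝ))/(i:ℝ) = 1 := by field_simp; ring
      rw [this, Real.arctan_one]
    have e2 : gfun i ((0:ℕ):ℝ) = -(Real.pi/4) := by
      unfold gfun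
      have : (2*((0:ℕ):ℝ) - (i:ℝ))/(i:ℝ) = -1 := by push_cast; field_simp; ring
      rw [this, show (-1:ℝ) = -(1:ℝ) by ring, Real.arctan_neg, Real.arctan_one]
    rw [e1, e2]; ring
  -- sum over range i of F is close to π/2
  have h1 : |(∑ k ∈ range i, F k) - Real.pi/2| ≤ 8/(i:ℝ) := by
    rw [← htel, ← Finset.sum_sub_distrib]
    refine (Finset.abs_sum_le_sum_abs _ _).trans ?_
    have hb : ∀ k ∈ range i, |F k - (gfun i ((k:ℝ)+1) - gfun i (k:ℝ))| ≤ 8/(i:ℝ)^2 := by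
      intro k hk
      exact step_bound i k hi (Finset.mem_range.1 hk)
    calc ∑ k ∈ range i, |F k - (gfun i ((k:ℝ)+1) - gfun i (k:ℝ))|
        ≤ ∑ _k ∈ range i, (8/(i:ℝ)^2) := Finset.sum_le_sum hb
      _ = i * (8/(i:ℝ)^2) := by rw [Finset.sum_const, Finset.card_range]; simp [nsmul_eq_mul]
      _ = 8/(i:ℝ) := by field_simp
  -- split off k = 0
  have hsplit : ∑ k ∈ range i, F k = F 0 + ∑ k ∈ Finset.Icc 1 (i-1), F k := by
    have : Finset.Icc 1 (i-1) = Finset.Ico 1 i := by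
      rw [← Finset.Ico_add_one_right_eq_Icc]
      congr 1
      omega
    rw [this, Finset.range_eq_Ico, Finset.sum_eq_sum_Ico_succ_bot (by omega : 0 < i)]
  have hF0 : F 0 = 1/(i:ℝ) := by
    rw [hF]
    norm_num
    rw [pow_two]
    field_simp
  have hsum : ∑ k ∈ Finset.Icc 1 (i-1), F k
      = (i:ℝ) * ∑ k ∈ Finset.Icc 1 (i-1), 1/((k:ℝ)^2+((i:ℝ)-(k:ℝ))^2) := by
    rw [Finset.mul_sum]
    refine Finset.sum_congr rfl fun k _ => ?_
    rw [hF, mul_one_div]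
  have hT : (∑ k ∈ Finset.Icc 1 (i-1), 1/((k:ℝ)^2+((i:ℝ)-(k:ℝ))^2))
      = ((∑ k ∈ range i, F k) - 1/(i:ℝ))/(i:ℝ) := by
    rw [hF0, hsum] at hsplit
    rw [eq_div_iff hIne]
    linarith
  rw [hT]
  have hre : ((∑ k ∈ range i, F k) - 1/(i:ℝ))/(i:ℝ) - Real.pi/(2*(i:ℝ))
      = ((∑ k ∈ range i, F k) - Real.pi/2 - 1/(i:ℝ))/(i:ℝ) := by
    field_simp
    ring
  rw [hre, abs_div, abs_of_pos hIpos]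
  have habs : |(∑ k ∈ range i, F k) - Real.pi/2 - 1/(i:ℝ)| ≤ 9/(i:ℝ) := by
    have h2 := abs_sub ((∑ k ∈ range i, F k) - Real.pi/2) (1/(i:ℝ))
    have h3 : |1/(i:ℝ)| = 1/(i:ℝ) := abs_of_pos (by positivity)
    have h4 : 8/(i:ℝ) + 1/(i:ℝ) = 9/(i:ℝ) := by field_simp; ring
    calc |(∑ k ∈ range i, F k) - Real.pi/2 - 1/(i:ℝ)|
        ≤ |(∑ k ∈ range i, F k) - Real.pi/2| + |1/(i:ℝ)| := h2
      _ ≤ 8/(i:ℝ) + 1/(i:ℝ) := by rw [h3]; exact add_le_add_left h1 _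
      _ = 9/(i:ℝ) := h4
  calc |(∑ k ∈ range i, F k) - Real.pi/2 - 1/(i:ℝ)|/(i:ℝ)
      ≤ (9/(i:ℝ))/(i:ℝ) := (div_le_div_iff_of_pos_right hIpos).2 habs
    _ = 9/(i:ℝ)^2 := by rw [div_div, ← pow_two]

lemma invsq_sum (K : ℕ) (hK : 1 ≤ K) :
    ∑ i ∈ Finset.Icc 2 K, (1/(i:ℝ)^2) ≤ 1 - 1/(K:ℝ) := by
  induction K, hK using Nat.le_induction with
  | base => simp
  | succ K hK ih =>
    rw [Finset.sum_Icc_succ_top (by omega : 2 ≤ K + 1)]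
    have hx : (1:ℝ) ≤ (K:ℝ) := by exact_mod_cast hK
    have hstep : 1/((K:ℝ)+1)^2 ≤ 1/(K:ℝ) - 1/((K:ℝ)+1) := by
      rw [div_sub_div _ _ (by linarith : (K:ℝ) ≠ 0) (by linarith : (K:ℝ)+1 ≠ 0),
        div_le_div_iff₀ (by positivity) (by positivity)]
      nlinarith
    push_cast
    push_cast at ih
    linarith

lemma harmonic_log (K : ℕ) (hK : 1 ≤ K) :
    0 ≤ Real.log (K:ℝ) - ∑ i ∈ Finset.Icc 2 K, (1/(i:ℝ)) ∧
    Real.log (K:ℝ) - ∑ i ∈ Finset.Icc 2 K, (1/(i:ℝ)) ≤ 1 - 1/(K:ℝ) := by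
  induction K, hK using Nat.le_induction with
  | base => simp
  | succ K hK ih =>
    rw [Finset.sum_Icc_succ_top (by omega : 2 ≤ K + 1)]
    have hx : (1:ℝ) ≤ (K:ℝ) := by exact_mod_cast hK
    have hx0 : (0:ℝ) < (K:ℝ) := by linarith
    have hx1 : (0:ℝ) < (K:ℝ)+1 := by linarith
    have hlogd : Real.log (((K:ℕ)+1:ℕ):ℝ) - Real.log (K:ℝ)
        = Real.log (((K:ℝ)+1)/(K:ℝ)) := by
      rw [Real.log_div (by linarith) (by linarith)]
      push_cast
      ring_nf
    have hup : Real.log (((K:ℝ)+1)/(K:ℝ)) ≤ 1/(K:ℝ) := by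
      have h := Real.log_le_sub_one_of_pos (show (0:ℝ) < ((K:ℝ)+1)/(K:ℝ) by positivity)
      have : ((K:ℝ)+1)/(K:ℝ) - 1 = 1/(K:ℝ) := by field_simp; ring
      linarith
    have hlo : 1/((K:ℝ)+1) ≤ Real.log (((K:ℝ)+1)/(K:ℝ)) := by
      have h := Real.log_le_sub_one_of_pos (show (0:ℝ) < (K:ℝ)/((K:ℝ)+1) by positivity)
      have hinv : Real.log (((K:ℝ)+1)/(K:ℝ)) = - Real.log ((K:ℝ)/((K:ℝ)+1)) := by
        rw [← Real.log_inv]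
        congr 1
        field_simp
      have he : (K:ℝ)/((K:ℝ)+1) - 1 = -(1/((K:ℝ)+1)) := by field_simp; ring
      rw [hinv]
      linarith
    obtain ⟨ih1, ih2⟩ := ih
    have hc : Real.log (((K+1:ℕ)):ℝ) = Real.log (K:ℝ) + Real.log (((K:ℝ)+1)/(K:ℝ)) := by
      push_cast
      push_cast at hlogd
      linarith
    constructor
    · rw [hc]; push_cast; linarith
    · rw [hc]; push_cast; linarith


/-- STATEMENT 3: There is a constant M > 0 such that for all K ≥ 2,
|T(K) − (π/2)·ln K| ≤ M: the interference grows logarithmically with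
leading coefficient π/2. -/
theorem interference_log_scaling :
    ∃ M : ℝ, 0 < M ∧ ∀ K : ℕ, 2 ≤ K →
      |interferenceSum K - (Real.pi / 2) * Real.log (K : ℝ)| ≤ M := by
  refine ⟨11, by norm_num, fun K hK => ?_⟩
  have hK1 : 1 ≤ K := by omega
  have hpi : (0:ℝ) < Real.pi := Real.pi_pos
  have hpi4 : Real.pi ≤ 4 := Real.pi_le_four
  set S : ℕ → ℝ := fun i => ∑ k ∈ Finset.Icc 1 (i-1), 1 / ((k:ℝ)^2 + ((i:ℝ)-(k:ℝ))^2) with hS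
  have e : interferenceSum K - (Real.pi / 2) * Real.log (K:ℝ)
      = (∑ i ∈ Finset.Icc 2 K, (S i - Real.pi/(2*(i:ℝ))))
        + (Real.pi/2) * ((∑ i ∈ Finset.Icc 2 K, (1/(i:ℝ))) - Real.log (K:ℝ)) := by
    rw [Finset.sum_sub_distrib]
    have h2 : ∑ i ∈ Finset.Icc 2 K, Real.pi/(2*(i:ℝ))
        = (Real.pi/2) * ∑ i ∈ Finset.Icc 2 K, (1/(i:ℝ)) := by
      rw [Finset.mul_sum]
      exact Finset.sum_congr rfl fun i _ => by rw [mul_one_div, div_div]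
    rw [h2]
    have : interferenceSum K = ∑ i ∈ Finset.Icc 2 K, S i := rfl
    rw [this]
    ring
  rw [e]
  have h1 : |∑ i ∈ Finset.Icc 2 K, (S i - Real.pi/(2*(i:ℝ)))| ≤ 9 := by
    refine (Finset.abs_sum_le_sum_abs _ _).trans ?_
    have hb : ∀ i ∈ Finset.Icc 2 K, |S i - Real.pi/(2*(i:ℝ))| ≤ 9 * (1/(i:ℝ)^2) := by
      intro i hi
      have h2i : 2 ≤ i := (Finset.mem_Icc.1 hi).1
      have := inner_bound i h2i
      rw [hS]
      calc |(∑ k ∈ Finset.Icc 1 (i-1), 1 / ((k:ℝ)^2 + ((i:ℝ)-(k:ℝ))^2)) - Real.pi/(2*(i:ℝ))|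
          ≤ 9/(i:ℝ)^2 := this
        _ = 9 * (1/(i:ℝ)^2) := by rw [mul_one_div]
    calc ∑ i ∈ Finset.Icc 2 K, |S i - Real.pi/(2*(i:ℝ))|
        ≤ ∑ i ∈ Finset.Icc 2 K, 9 * (1/(i:ℝ)^2) := Finset.sum_le_sum hb
      _ = 9 * ∑ i ∈ Finset.Icc 2 K, (1/(i:ℝ)^2) := by rw [Finset.mul_sum]
      _ ≤ 9 * (1 - 1/(K:ℝ)) := by
          have := invsq_sum K hK1
          nlinarith
      _ ≤ 9 := by
          have : (0:ℝ) < 1/(K:ℝ) := by positivity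
          nlinarith
  have h2 : |(∑ i ∈ Finset.Icc 2 K, (1/(i:ℝ))) - Real.log (K:ℝ)| ≤ 1 := by
    obtain ⟨hl, hu⟩ := harmonic_log K hK1
    have : (0:ℝ) < 1/(K:ℝ) := by positivity
    rw [abs_le]
    constructor <;> linarith
  calc |(∑ i ∈ Finset.Icc 2 K, (S i - Real.pi/(2*(i:ℝ))))
        + (Real.pi/2) * ((∑ i ∈ Finset.Icc 2 K, (1/(i:ℝ))) - Real.log (K:ℝ))|
      ≤ |∑ i ∈ Finset.Icc 2 K, (S i - Real.pi/(2*(i:ℝ)))|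
        + |(Real.pi/2) * ((∑ i ∈ Finset.Icc 2 K, (1/(i:ℝ))) - Real.log (K:ℝ))| := abs_add_le _ _
    _ ≤ 9 + (Real.pi/2) * 1 := by
        rw [abs_mul, abs_of_pos (by linarith : (0:ℝ) < Real.pi/2)]
        have := mul_le_mul_of_nonneg_left h2 (by linarith : (0:ℝ) ≤ Real.pi/2)
        linarith
    _ ≤ 11 := by linarith
end

section
/- Fix n > 0 and let g(x) = (x+1)·log(x+1) − x·log x. Then lim_{b→∞} (b·g(n/b)) / (n·log b) = 1. In particular, the Holevo capacity C_J(b, 1, n, 0) = b·g(n/b) of a noiseless link grows without bound as the baud-rate b → ∞ (asymptotically like n·log b), whereas the Shannon capacity b·log(1 + n/b) converges to the finite limit n. -/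
/-- g(x) = (x+1)·log(x+1) − x·log x (with the Mathlib convention log 0 = 0,
so g(0) = 0), the Holevo capacity per pulse. -/
noncomputable def g (x : ℝ) : ℝ := (x + 1) * Real.log (x + 1) - x * Real.log x

/-- d(τ, n, ν) = √(((1+τ)n + ν + 1)² − 4τn(n+1)). -/
noncomputable def dFun (τ n ν : ℝ) : ℝ :=
  Real.sqrt (((1 + τ) * n + ν + 1) ^ 2 - 4 * τ * n * (n + 1))

/-- d_x(τ, n, ν) = (d(τ, n, ν) − 1 + (−1)^x((τ−1)n + ν))/2 for x ∈ {0,1}. -/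
noncomputable def dx (x : ℕ) (τ n ν : ℝ) : ℝ :=
  (dFun τ n ν - 1 + (-1 : ℝ) ^ x * ((τ - 1) * n + ν)) / 2

/-- Shannon capacity C_S(b, τ, n, ν) = b·log(1 + τn/(b + ν)). -/
noncomputable def C_S (b τ n ν : ℝ) : ℝ := b * Real.log (1 + τ * n / (b + ν))

/-- Holevo (joint-detection) capacity C_J(b, τ, n, ν) = b·(g((n+ν)/b) − g(ν/b)). -/
noncomputable def C_J (b τ n ν : ℝ) : ℝ := b * (g ((n + ν) / b) - g (ν / b))

/-- Entanglement-assisted capacity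
C_E(b, τ, n, ν) = b·∑_{x=0,1} (g((τn + x·ν)/b) − g(d_x(τ, n/b, ν/b))). -/
noncomputable def C_E (b τ n ν : ℝ) : ℝ :=
  b * ((g ((τ * n + 0 * ν) / b) - g (dx 0 τ (n / b) (ν / b))) +
       (g ((τ * n + 1 * ν) / b) - g (dx 1 τ (n / b) (ν / b))))

/-!
The identity b·g(n/b) = (b + n)·log(1 + n/b) + n·log b − n·log n separates the
growing term n·log b from a remainder that converges, since (b + n)·log(1 + n/b) → n.
-/

open Filter Real Topology

lemma mul_g_div_eq {n b : ℝ} (hn : n ≠ 0) (hb : b ≠ 0) :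
    b * g (n / b) = (b + n) * log (1 + n / b) + n * log b - n * log n := by
  rw [g, log_div hn hb, add_comm (n / b) 1]
  field_simp
  ring

lemma tendsto_add_mul_log_one_add_div_atTop (n : ℝ) :
    Tendsto (fun b : ℝ => (b + n) * log (1 + n / b)) atTop (𝓝 n) := by
  have hlog : Tendsto (fun b : ℝ => log (1 + n / b)) atTop (𝓝 0) := by
    have h : Tendsto (fun b : ℝ => 1 + n / b) atTop (𝓝 1) := by
      simpa using
        (tendsto_const_nhds (x := (1 : ℝ))).add (tendsto_const_nhds.div_atTop tendsto_id)
    simpa [Function.comp_def] using (continuousAt_log one_ne_zero).tendsto.comp h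
  simpa [add_mul] using (tendsto_mul_log_one_add_div_atTop n).add (hlog.const_mul n)

lemma tendsto_mul_g_div_sub_mul_log_atTop {n : ℝ} (hn : n ≠ 0) :
    Tendsto (fun b : ℝ => b * g (n / b) - n * log b) atTop (𝓝 (n - n * log n)) := by
  refine ((tendsto_add_mul_log_one_add_div_atTop n).sub_const (n * log n)).congr' ?_
  filter_upwards [eventually_ne_atTop 0] with b hb
  rw [mul_g_div_eq hn hb]
  ring

lemma tendsto_div_nhds_one_of_tendsto_sub {α : Type*} {l : Filter α} {f h : α → ℝ} {c : ℝ}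
    (hc : Tendsto (fun x => f x - h x) l (𝓝 c)) (hh : Tendsto h l atTop) :
    Tendsto (fun x => f x / h x) l (𝓝 1) := by
  have h1 : Tendsto (fun x => (f x - h x) / h x + 1) l (𝓝 (0 + 1)) :=
    (hc.div_atTop hh).add tendsto_const_nhds
  rw [zero_add] at h1
  refine h1.congr' ?_
  filter_upwards [hh.eventually_ne_atTop 0] with x hx
  rw [sub_div, div_self hx, sub_add_cancel]

lemma tendsto_atTop_of_tendsto_sub {α : Type*} {l : Filter α} {f h : α → ℝ} {c : ℝ}
    (hc : Tendsto (fun x => f x - h x) l (𝓝 c)) (hh : Tendsto h l atTop) :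
    Tendsto f l atTop := by
  simpa using hc.add_atTop hh

/-- STATEMENT 11: for fixed n > 0, lim_{b→∞} (b·g(n/b))/(n·log b) = 1; in
particular the Holevo capacity b·g(n/b) of a noiseless link grows without
bound as b → ∞, whereas the Shannon capacity b·log(1 + n/b) converges to n. -/
theorem holevo_large_baudrate_asymptotics (n : ℝ) (hn : 0 < n) :
    Filter.Tendsto (fun b : ℝ => (b * g (n / b)) / (n * Real.log b))
      Filter.atTop (nhds 1) ∧
    Filter.Tendsto (fun b : ℝ => b * g (n / b)) Filter.atTop Filter.atTop ∧
    Filter.Tendsto (fun b : ℝ => b * Real.log (1 + n / b)) Filter.atTop (nhds n) := by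
  have hlog : Tendsto (fun b : ℝ => n * log b) atTop atTop :=
    tendsto_log_atTop.const_mul_atTop hn
  have hrem := tendsto_mul_g_div_sub_mul_log_atTop hn.ne'
  exact ⟨tendsto_div_nhds_one_of_tendsto_sub hrem hlog, tendsto_atTop_of_tendsto_sub hrem hlog,
    tendsto_mul_log_one_add_div_atTop n⟩
end

section
/- Fix B > 0, τ ∈ (0,1], n > 0 and c > 0. Define the per-link OFDM Shannon capacity O(K) = (B/K²)·log(1 + τnK²/B) and the per-link CDMA Shannon capacity with logarithmically growing interference D(K) = B·log(1 + τn/(B + c·n·log K)) for integers K ≥ 2. Then lim_{K→∞} O(K)/D(K) = 0. That is, as the number K² of uncoordinated robot–computing-unit pairs grows, the capacity of a link using an individual频 spectral slice of width B/K² becomes negligible compared with that of a link spreading over the full spectrum B and treating the other users' signals as noise. -/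
/-!
The OFDM capacity `(B/K²)·log(1 + τnK²/B)` is at most `(B/K²)·(log(1 + τn/B) + 2 log K)`,
so it decays like `log K / K²`, while `log(1 + y) ≥ y/(1 + y)` bounds the CDMA capacity from
below by `Bτn / (B + τn + cn log K)`, which decays only like `1 / log K`. The ratio is therefore
`O((log K)² / K²)`.
-/

open Real Filter Topology

lemma Real.log_one_add_mul_sq_div_le {a B x : ℝ} (ha : 0 ≤ a) (hB : 0 < B) (hx : 1 ≤ x) :
    log (1 + a * x ^ 2 / B) ≤ log (1 + a / B) + 2 * log x := by
  have hx2 : 1 ≤ x ^ 2 := one_le_pow₀ hx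
  have hle : 1 + a * x ^ 2 / B ≤ (1 + a / B) * x ^ 2 := by
    have : (1 + a / B) * x ^ 2 = x ^ 2 + a * x ^ 2 / B := by ring
    rw [this]
    linarith
  calc log (1 + a * x ^ 2 / B) ≤ log ((1 + a / B) * x ^ 2) := log_le_log (by positivity) hle
    _ = log (1 + a / B) + 2 * log x := by
      rw [log_mul (by positivity) (by positivity), log_pow, Nat.cast_ofNat]

lemma Real.div_add_le_log_one_add_div {a N : ℝ} (ha : 0 ≤ a) (hN : 0 < N) :
    a / (N + a) ≤ log (1 + a / N) := by
  have h := one_sub_inv_le_log_of_pos (x := 1 + a / N) (by positivity)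
  have hN' : N ≠ 0 := hN.ne'
  have hNa : N + a ≠ 0 := by positivity
  convert h using 1
  field_simp
  ring

lemma tendsto_const_add_mul_log_div_atTop (p q : ℝ) :
    Tendsto (fun x : ℝ => (p + q * log x) / x) atTop (𝓝 0) := by
  have hlog : Tendsto (fun x : ℝ => log x / x) atTop (𝓝 0) := by
    simpa using tendsto_pow_log_div_mul_add_atTop 1 0 1 one_ne_zero
  have := (tendsto_inv_atTop_zero.const_mul p).add (hlog.const_mul q)
  simp only [mul_zero, add_zero] at this
  refine this.congr fun x => ?_
  ring

section OfdmVsCdma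

variable {B a d : ℝ}

lemma ofdm_div_cdma_le (hB : 0 < B) (ha : 0 < a) (hd : 0 ≤ d) {x : ℝ} (hx : 1 ≤ x) :
    (B / x ^ 2) * log (1 + a * x ^ 2 / B) / (B * log (1 + a / (B + d * log x))) ≤
      a⁻¹ * ((log (1 + a / B) + 2 * log x) / x * ((B + a + d * log x) / x)) := by
  have hlogx : 0 ≤ log x := log_nonneg hx
  have hnoise : 0 < B + d * log x := by positivity
  have hP : 0 ≤ log (1 + a / B) := log_nonneg (le_add_of_nonneg_right (by positivity))
  have hnum : (B / x ^ 2) * log (1 + a * x ^ 2 / B) ≤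
      (B / x ^ 2) * (log (1 + a / B) + 2 * log x) :=
    mul_le_mul_of_nonneg_left (log_one_add_mul_sq_div_le ha.le hB hx) (by positivity)
  have hden : B * (a / (B + d * log x + a)) ≤ B * log (1 + a / (B + d * log x)) :=
    mul_le_mul_of_nonneg_left (div_add_le_log_one_add_div ha.le hnoise) hB.le
  calc (B / x ^ 2) * log (1 + a * x ^ 2 / B) / (B * log (1 + a / (B + d * log x)))
      ≤ (B / x ^ 2) * (log (1 + a / B) + 2 * log x) / (B * (a / (B + d * log x + a))) :=
        div_le_div₀ (by positivity) hnum (by positivity) hden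
    _ = a⁻¹ * ((log (1 + a / B) + 2 * log x) / x * ((B + a + d * log x) / x)) := by
        have : x ≠ 0 := by positivity
        field_simp
        ring

lemma ofdm_div_cdma_nonneg (hB : 0 < B) (ha : 0 ≤ a) (hd : 0 ≤ d) {x : ℝ} (hx : 1 ≤ x) :
    0 ≤ (B / x ^ 2) * log (1 + a * x ^ 2 / B) / (B * log (1 + a / (B + d * log x))) := by
  have hnoise : 0 < B + d * log x := by have := log_nonneg hx; positivity
  have hnum : 0 ≤ log (1 + a * x ^ 2 / B) := log_nonneg (le_add_of_nonneg_right (by positivity))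
  have hden : 0 ≤ log (1 + a / (B + d * log x)) :=
    log_nonneg (le_add_of_nonneg_right (by positivity))
  positivity

theorem tendsto_ofdm_div_cdma_atTop (hB : 0 < B) (ha : 0 < a) (hd : 0 ≤ d) :
    Tendsto (fun x : ℝ =>
        (B / x ^ 2) * log (1 + a * x ^ 2 / B) / (B * log (1 + a / (B + d * log x))))
      atTop (𝓝 0) := by
  have hbound : Tendsto (fun x : ℝ =>
      a⁻¹ * ((log (1 + a / B) + 2 * log x) / x * ((B + a + d * log x) / x))) atTop (𝓝 0) := by
    simpa using ((tendsto_const_add_mul_log_div_atTop _ 2).mul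
      (tendsto_const_add_mul_log_div_atTop (B + a) d)).const_mul a⁻¹
  refine tendsto_of_tendsto_of_tendsto_of_le_of_le' tendsto_const_nhds hbound ?_ ?_
  · filter_upwards [eventually_ge_atTop 1] with x hx using ofdm_div_cdma_nonneg hB ha.le hd hx
  · filter_upwards [eventually_ge_atTop 1] with x hx using ofdm_div_cdma_le hB ha hd hx

end OfdmVsCdma

/-- fix B > 0, τ ∈ (0,1], n > 0, c > 0. With the per-link OFDM
Shannon capacity O(K) = (B/K²)·log(1 + τnK²/B) and the per-link CDMA Shannon
capacity D(K) = B·log(1 + τn/(B + c·n·log K)), one has O(K)/D(K) → 0 as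
K → ∞: the OFDM spectral-slice capacity becomes negligible compared with the
full-spectrum CDMA capacity. -/
theorem ofdm_negligible_vs_cdma (B τ n c : ℝ) (hB : 0 < B)
    (hτ : τ ∈ Set.Ioc (0 : ℝ) 1) (hn : 0 < n) (hc : 0 < c) :
    Filter.Tendsto
      (fun K : ℕ =>
        ((B / (K : ℝ) ^ 2) * Real.log (1 + τ * n * (K : ℝ) ^ 2 / B)) /
          (B * Real.log (1 + τ * n / (B + c * n * Real.log (K : ℝ)))))
      Filter.atTop (nhds 0) :=
  (tendsto_ofdm_div_cdma_atTop hB (mul_pos hτ.1 hn) (mul_pos hc hn).le).comp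
    tendsto_natCast_atTop_atTop
end

section
/- Fix n > 0 and ν ≥ 0, and define F(b) = b·(g((n+ν)/b) − g(ν/b)) for b > 0, where g(x) = (x+1)·log(x+1) − x·log x and g(0) = 0. Then F is differentiable on (0, ∞) with F′(b) = log((b + n + ν)/(b + ν)) > 0 for every b > 0; in particular the Holevo capacity C_J(b, τ, n, ν) = F(b) is strictly increasing in the baud-rate b. -/
/-! Writing `φ(x) = x log x`, one has `b · g(x/b) = φ(x + b) − φ(x) − φ(b)`, so in
`b · (g(s/b) − g(t/b))` the term `φ(b)` cancels and the capacity is `φ(b + s) − φ(b + t)`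
up to a constant. Its derivative is `log(b + s) − log(b + t)`, positive when `s > t`. -/

open Real

lemma mul_log_div (y : ℝ) {b : ℝ} (hb : b ≠ 0) : y * log (y / b) = y * log y - y * log b := by
  rcases eq_or_ne y 0 with rfl | hy
  · simp
  · rw [log_div hy hb, mul_sub]

lemma mul_g_div (x : ℝ) {b : ℝ} (hb : b ≠ 0) :
    b * g (x / b) = (x + b) * log (x + b) - x * log x - b * log b := by
  have hshift : x / b + 1 = (x + b) / b := by field_simp
  have hscale : ∀ y, b * (y / b * log (y / b)) = y * log y - y * log b := fun y => by
    rw [← mul_log_div y hb]; field_simp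
  rw [g, hshift, mul_sub, hscale, hscale]
  ring

lemma mul_g_div_sub_g_div (s t : ℝ) {b : ℝ} (hb : b ≠ 0) :
    b * (g (s / b) - g (t / b)) =
      (b + s) * log (b + s) - (b + t) * log (b + t) - (s * log s - t * log t) := by
  rw [mul_sub, mul_g_div s hb, mul_g_div t hb, add_comm s, add_comm t]
  ring

lemma hasDerivAt_mul_log_add (a : ℝ) {b : ℝ} (h : b + a ≠ 0) :
    HasDerivAt (fun b => (b + a) * log (b + a)) (log (b + a) + 1) b :=
  (hasDerivAt_mul_log h).comp_add_const b a

theorem hasDerivAt_mul_g_div_sub_g_div (s t : ℝ) {b : ℝ} (hb : b ≠ 0) (hs : b + s ≠ 0)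
    (ht : b + t ≠ 0) :
    HasDerivAt (fun b => b * (g (s / b) - g (t / b))) (log ((b + s) / (b + t))) b := by
  have hφ : (fun b => b * (g (s / b) - g (t / b))) =ᶠ[nhds b]
      fun b => (b + s) * log (b + s) - (b + t) * log (b + t) - (s * log s - t * log t) := by
    filter_upwards [eventually_ne_nhds hb] with b' hb' using mul_g_div_sub_g_div s t hb'
  have hderiv := ((hasDerivAt_mul_log_add s hs).fun_sub (hasDerivAt_mul_log_add t ht)).sub_const
    (s * log s - t * log t)
  rw [log_div hs ht]
  exact (hderiv.congr_of_eventuallyEq hφ).congr_deriv (by ring)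

/-- STATEMENT 15: for fixed n > 0, ν ≥ 0, the Holevo capacity
F(b) = b·(g((n+ν)/b) − g(ν/b)) is differentiable on (0,∞) with derivative
F′(b) = log((b+n+ν)/(b+ν)) > 0; in particular F is strictly increasing in b. -/
theorem holevo_strictly_increasing_in_baudrate (n ν : ℝ) (hn : 0 < n) (hν : 0 ≤ ν) :
    (∀ b : ℝ, 0 < b →
      HasDerivAt (fun b : ℝ => b * (g ((n + ν) / b) - g (ν / b)))
        (Real.log ((b + n + ν) / (b + ν))) b ∧
      0 < Real.log ((b + n + ν) / (b + ν))) ∧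
    StrictMonoOn (fun b : ℝ => b * (g ((n + ν) / b) - g (ν / b))) (Set.Ioi 0) := by
  have hderiv : ∀ b : ℝ, 0 < b →
      HasDerivAt (fun b : ℝ => b * (g ((n + ν) / b) - g (ν / b)))
        (Real.log ((b + n + ν) / (b + ν))) b := fun b hb => by
    rw [add_assoc b]
    exact hasDerivAt_mul_g_div_sub_g_div _ _ hb.ne' (by positivity) (by positivity)
  have hpos : ∀ b : ℝ, 0 < b → 0 < Real.log ((b + n + ν) / (b + ν)) := fun b hb =>
    log_pos ((one_lt_div (by positivity)).2 (by linarith))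
  refine ⟨fun b hb => ⟨hderiv b hb, hpos b hb⟩, ?_⟩
  refine strictMonoOn_of_hasDerivWithinAt_pos (f' := fun b => log ((b + n + ν) / (b + ν)))
    (convex_Ioi 0) (fun b hb => (hderiv b hb).continuousAt.continuousWithinAt) ?_ ?_
  all_goals simp only [interior_Ioi, Set.mem_Ioi]
  exacts [fun b hb => (hderiv b hb).hasDerivWithinAt, hpos]
end
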